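/- arXiv:1301.2401 — 6 statements merged into one kernel-verified Lean document; each statement's English description precedes it below -/
import Mathlib

section
/- Let (P_n) be a MOPS with normalization factors h_n and (P̂_n) its kernel MOPS (for the Christoffel transform at c₀) with normalization factors ĥ_n. Then P_n satisfies the three-term recurrence t·P_n = P_{n+1} + (ĥ_n/h_n + h_n/ĥ_{n-1} + c₀)·P_n + (h_n/h_{n-1})·P_{n-1} for n ≥ 1. -/
open Polynomial

/-!
A polynomial of degree at most `n` that `M` annihilates against `X ^ k` for `k < n` is a multiple
of `R n`, the factor being read off from `M (X ^ n * ·)`. Applied to `(X - c₀) P̂ₙ - Pₙ₊₁` and to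
`Pₙ₊₁ - P̂ₙ₊₁` this gives the two Christoffel relations, and substituting the first into
`X Pₙ = (X - c₀) (P̂ₙ + (hₙ / ĥₙ₋₁) P̂ₙ₋₁) + c₀ Pₙ` yields the recurrence.
-/

section OrthogonalPolynomials

variable {K : Type*} [Field K]

structure IsMonicOrthogonalSeq (M : K[X] →ₗ[K] K) (R : ℕ → K[X]) (g : ℕ → K) : Prop where
  isMonicOfDegree : ∀ n, IsMonicOfDegree (R n) n
  orthogonal : ∀ n k, k ≤ n → M (X ^ k * R n) = if n = k then g n else 0
  ne_zero : ∀ n, g n ≠ 0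

noncomputable def christoffel (L : K[X] →ₗ[K] K) (c : K) : K[X] →ₗ[K] K :=
  L ∘ₗ LinearMap.mulLeft K (X - C c)

lemma christoffel_apply (L : K[X] →ₗ[K] K) (c : K) (p : K[X]) :
    christoffel L c p = L ((X - C c) * p) :=
  rfl

lemma map_C_mul (M : K[X] →ₗ[K] K) (a : K) (p : K[X]) : M (C a * p) = a * M p := by
  rw [C_mul', map_smul, smul_eq_mul]

namespace IsMonicOrthogonalSeq

variable {M : K[X] →ₗ[K] K} {R : ℕ → K[X]} {g : ℕ → K}

theorem eq_zero_of_degree_lt (hR : IsMonicOrthogonalSeq M R g) :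
    ∀ {n : ℕ} {Q : K[X]}, Q.degree < n → (∀ k < n, M (X ^ k * Q) = 0) → Q = 0
  | 0, Q, hdeg, _ => by simpa using hdeg
  | n + 1, Q, hdeg, horth => by
    set c := Q.coeff n
    have hRn := hR.isMonicOfDegree n
    have hQ : Q = C c * R n := by
      refine sub_eq_zero.mp (hR.eq_zero_of_degree_lt (n := n) ?_ fun k hk => ?_)
      · rw [degree_lt_iff_coeff_zero]
        intro m hm
        rcases hm.eq_or_lt with rfl | hlt
        · have h1 : (R n).coeff n = 1 := by simpa [hRn.natDegree_eq] using hRn.monic.coeff_natDegree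
          simp [c, h1]
        have hRm : (R n).coeff m = 0 := coeff_eq_zero_of_natDegree_lt (hRn.natDegree_eq.symm ▸ hlt)
        simp [hRm, (degree_lt_iff_coeff_zero Q (n + 1)).mp hdeg m hlt]
      · rw [mul_sub, mul_left_comm, map_sub, map_C_mul, horth k (by omega),
          hR.orthogonal n k hk.le, if_neg hk.ne', mul_zero, sub_zero]
    have hc : c * g n = 0 := by
      simpa [hQ, mul_left_comm _ (C c), map_C_mul, hR.orthogonal n n le_rfl]
        using horth n n.lt_succ_self
    rw [hQ, (mul_eq_zero.mp hc).resolve_right (hR.ne_zero n), map_zero, zero_mul]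

theorem eq_C_mul_of_orthogonal (hR : IsMonicOrthogonalSeq M R g) {n : ℕ} {Q : K[X]} {a : K}
    (hdeg : Q.natDegree ≤ n) (horth : ∀ k ≤ n, M (X ^ k * Q) = if n = k then a else 0) :
    Q = C (a / g n) * R n := by
  refine sub_eq_zero.mp (hR.eq_zero_of_degree_lt (n := n + 1) ?_ fun k hk => ?_)
  · have hRn : (R n).natDegree ≤ n := (hR.isMonicOfDegree n).natDegree_eq.le
    refine (degree_le_of_natDegree_le ?_).trans_lt (WithBot.coe_lt_coe.mpr n.lt_succ_self)
    exact (natDegree_sub_le_of_le hdeg ((natDegree_C_mul_le _ _).trans hRn)).trans (max_self n).le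
  · rw [mul_sub, mul_left_comm, map_sub, map_C_mul, horth k (by omega),
      hR.orthogonal n k (by omega)]
    split_ifs
    · field_simp [hR.ne_zero n]; ring
    · ring

variable {L : K[X] →ₗ[K] K} {c : K} {P Phat : ℕ → K[X]} {h hhat : ℕ → K}

theorem X_sub_C_mul_kernel_eq (hP : IsMonicOrthogonalSeq L P h)
    (hPhat : IsMonicOrthogonalSeq (christoffel L c) Phat hhat) (n : ℕ) :
    (X - C c) * Phat n = P (n + 1) + C (hhat n / h n) * P n := by
  rw [← sub_eq_iff_eq_add']
  refine hP.eq_C_mul_of_orthogonal ?_ fun k hk => ?_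
  · have hmul : IsMonicOfDegree ((X - C c) * Phat n) (n + 1) := by
      simpa [add_comm] using (isMonicOfDegree_X_sub_one c).mul (hPhat.isMonicOfDegree n)
    exact Nat.lt_succ_iff.mp (hmul.natDegree_sub_lt n.succ_ne_zero (hP.isMonicOfDegree (n + 1)))
  · rw [mul_sub, map_sub, mul_left_comm, ← christoffel_apply, hPhat.orthogonal n k hk,
      hP.orthogonal (n + 1) k (by omega), if_neg (show n + 1 ≠ k by omega), sub_zero]

theorem succ_eq_kernel_add (hP : IsMonicOrthogonalSeq L P h)
    (hPhat : IsMonicOrthogonalSeq (christoffel L c) Phat hhat) (n : ℕ) :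
    P (n + 1) = Phat (n + 1) + C (h (n + 1) / hhat n) * Phat n := by
  rw [← sub_eq_iff_eq_add']
  refine hPhat.eq_C_mul_of_orthogonal ?_ fun k hk => ?_
  · exact Nat.lt_succ_iff.mp ((hP.isMonicOfDegree (n + 1)).natDegree_sub_lt n.succ_ne_zero
      (hPhat.isMonicOfDegree (n + 1)))
  · have hX : christoffel L c (X ^ k * P (n + 1)) = if n = k then h (n + 1) else 0 := by
      rw [christoffel_apply, sub_mul, ← mul_assoc, ← pow_succ', map_sub, map_C_mul,
        hP.orthogonal (n + 1) (k + 1) (by omega), hP.orthogonal (n + 1) k (by omega),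
        if_neg (show n + 1 ≠ k by omega), mul_zero, sub_zero]
      simp
    rw [mul_sub, map_sub, hX, hPhat.orthogonal (n + 1) k (by omega),
      if_neg (show n + 1 ≠ k by omega), sub_zero]

end IsMonicOrthogonalSeq

end OrthogonalPolynomials

/-- three-term recurrence for `Pₙ` with coefficients expressed through
the normalization factors of the Christoffel pair. -/
theorem three_term_recurrence_P
    (c₀ : ℂ) (L : Polynomial ℂ →ₗ[ℂ] ℂ)
    (P Phat : ℕ → Polynomial ℂ) (h hhat : ℕ → ℂ)
    (hPmonic : ∀ n, (P n).Monic) (hPdeg : ∀ n, (P n).natDegree = n)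
    (hPorth : ∀ n k, k ≤ n → L (X ^ k * P n) = if n = k then h n else 0)
    (hh : ∀ n, h n ≠ 0)
    (hQmonic : ∀ n, (Phat n).Monic) (hQdeg : ∀ n, (Phat n).natDegree = n)
    (hQorth : ∀ n k, k ≤ n →
      L ((X - C c₀) * (X ^ k * Phat n)) = if n = k then hhat n else 0)
    (hhhat : ∀ n, hhat n ≠ 0) :
    ∀ n, 1 ≤ n →
      X * P n =
        P (n + 1) + C (hhat n / h n + h n / hhat (n - 1) + c₀) * P n
          + C (h n / h (n - 1)) * P (n - 1) := by
  intro n hn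
  obtain ⟨m, rfl⟩ := Nat.exists_eq_add_of_le' hn
  have hP : IsMonicOrthogonalSeq L P h := ⟨fun n => ⟨hPdeg n, hPmonic n⟩, hPorth, hh⟩
  have hPhat : IsMonicOrthogonalSeq (christoffel L c₀) Phat hhat :=
    ⟨fun n => ⟨hQdeg n, hQmonic n⟩, hQorth, hhhat⟩
  have hratio : h (m + 1) / h m = h (m + 1) / hhat m * (hhat m / h m) := by
    field_simp [hhhat m]
  rw [Nat.add_sub_cancel, hratio, map_add, map_add, map_mul]
  linear_combination (X - C c₀) * hP.succ_eq_kernel_add hPhat m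
    + hP.X_sub_C_mul_kernel_eq hPhat (m + 1)
    + C (h (m + 1) / hhat m) * hP.X_sub_C_mul_kernel_eq hPhat m
end

section
/- If x_n satisfies the discrete Riccati equation x_n = -c₂²/(n·x_{n-1} + c₂(c₁ + c₀c₂)) with c₂ > 0 and c₁ + c₀c₂ ≠ 0, then X_n := (2(n+1)/(c₂(c₁+c₀c₂)))·x_n + 1 satisfies the discrete Painlevé II equation X_{n+1} + X_{n-1} = ((a n + b)X_n + c)/(1 - X_n²) with a = 8/(c₁+c₀c₂)², b = 12/(c₁+c₀c₂)², c = -4/(c₁+c₀c₂)², for all n ≥ 1 where 1 - X_n² ≠ 0. -/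
/-!
Writing `X n = 2 (n + 1) x n / (c₂ s) + 1` with `s = c₁ + c₀ c₂`, the Riccati equation becomes the
factored relation `(X (m + 1) - 1) (X m + 1) = -4 (m + 2) / s²`. Solving it for `X (m + 2)` and
for `X m` in terms of `X (m + 1)` and adding the two expressions gives discrete Painlevé II.
-/

section

variable {F : Type*} [Field F]

theorem dPII_of_factored_riccati (k : F) (X : ℕ → F)
    (hX : ∀ m : ℕ, (X (m + 1) - 1) * (X m + 1) = -4 * k * (m + 2)) (m : ℕ)
    (hXm : 1 - X (m + 1) ^ 2 ≠ 0) :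
    X (m + 2) + X m = ((8 * k * (m + 1) + 12 * k) * X (m + 1) - 4 * k) / (1 - X (m + 1) ^ 2) := by
  have hnext := hX (m + 1)
  have hprev := hX m
  push_cast at hnext
  rw [eq_div_iff hXm]
  linear_combination (1 - X (m + 1)) * hnext - (X (m + 1) + 1) * hprev

theorem factored_riccati_of_riccati {c s : F} (hc : c ≠ 0) (hs : s ≠ 0) {x X : ℕ → F}
    (hX : ∀ n : ℕ, X n = 2 * ((n : F) + 1) / (c * s) * x n + 1) {m : ℕ}
    (hx : x (m + 1) * (((m : F) + 1) * x m + c * s) = -c ^ 2) :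
    (X (m + 1) - 1) * (X m + 1) = -4 * (s ^ 2)⁻¹ * (m + 2) := by
  rw [hX, hX]
  push_cast
  field_simp
  linear_combination 4 * (m + 2) * hx

end

/-- solutions of the discrete Riccati equation coming from the Hermite
polynomials give solutions of the discrete Painlevé II equation. -/
theorem riccati_to_dPII
    (c₂ : ℝ) (hc₂ : 0 < c₂) (c₀ c₁ : ℂ) (hne : c₁ + c₀ * (c₂ : ℂ) ≠ 0)
    (x : ℕ → ℂ)
    (hx : ∀ n, 1 ≤ n →
      x n * ((n : ℂ) * x (n - 1) + (c₂ : ℂ) * (c₁ + c₀ * (c₂ : ℂ))) = -(c₂ : ℂ) ^ 2)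
    (X : ℕ → ℂ)
    (hX : ∀ n, X n = 2 * ((n : ℂ) + 1) / ((c₂ : ℂ) * (c₁ + c₀ * (c₂ : ℂ))) * x n + 1)
    (a b c : ℂ)
    (ha : a = 8 / (c₁ + c₀ * (c₂ : ℂ)) ^ 2)
    (hb : b = 12 / (c₁ + c₀ * (c₂ : ℂ)) ^ 2)
    (hc : c = -4 / (c₁ + c₀ * (c₂ : ℂ)) ^ 2) :
    ∀ n, 1 ≤ n → 1 - (X n) ^ 2 ≠ 0 →
      X (n + 1) + X (n - 1) = ((a * (n : ℂ) + b) * X n + c) / (1 - (X n) ^ 2) := by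
  intro n hn hXn
  obtain ⟨m, rfl⟩ := Nat.exists_eq_add_of_le' hn
  have hc₂' : (c₂ : ℂ) ≠ 0 := by exact_mod_cast hc₂.ne'
  have hfactored (j : ℕ) := factored_riccati_of_riccati hc₂' hne hX (m := j)
    (by simpa using hx (j + 1) j.succ_pos)
  rw [ha, hb, hc, Nat.add_sub_cancel]
  convert dPII_of_factored_riccati _ X hfactored m hXn using 2
  push_cast
  ring
end

section
/- The discrete Painlevé II equation X_{n+1} + X_{n-1} = ((an+b)X_n + c)/(1 - X_n²) with c = -a/2 admits the specialization to the discrete Riccati equation X_{n+1} = (4X_n - 2an - a - 2b + 4)/(4(X_n + 1)): that is, if X_n satisfies this Riccati equation for all n (with X_n ≠ ±1), then X_n satisfies the discrete Painlevé II equation. -/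
/-!
Write `z = X n`, `u = a n + b`. The Riccati equation at `n - 1` and at `n` reads
`4 X_{n-1} (z - 1) = -4z - 2u + a + 4` and `4 X_{n+1} (z + 1) = 4z - 2u - a + 4`.
Multiplying the first by `z + 1`, the second by `z - 1` and adding gives
`4 (X_{n+1} + X_{n-1}) (z² - 1) = 2a - 4uz`, which is dPII once `c = -a/2`.
-/

section RiccatiToPainleve

variable {K : Type*} [Field K]

theorem riccati_neighbours_add_mul_one_sub_sq [NeZero (2 : K)] {a c u p z q : K}
    (hc : c = -a / 2)
    (hprev : z * (4 * (p + 1)) = 4 * p - 2 * u + a + 4)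
    (hnext : q * (4 * (z + 1)) = 4 * z - 2 * u - a + 4) :
    (q + p) * (1 - z ^ 2) = u * z + c := by
  have h2 : (2 : K) ≠ 0 := NeZero.ne 2
  have h2c : 2 * c = -a := by rw [hc, mul_div_cancel₀ _ h2]
  apply mul_left_cancel₀ (mul_ne_zero h2 h2)
  linear_combination (-(z + 1)) * hprev - (z - 1) * hnext - 2 * h2c

theorem one_sub_sq_ne_zero {x : K} (h1 : x ≠ 1) (h2 : x ≠ -1) : 1 - x ^ 2 ≠ 0 := by
  rw [sub_ne_zero, ne_comm, Ne, sq_eq_one_iff]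
  exact not_or.2 ⟨h1, h2⟩

end RiccatiToPainleve

/-- the discrete Painlevé II equation with `c = -a/2` admits the
specialization to the discrete Riccati equation
`X_{n+1} = (4Xₙ - 2an - a - 2b + 4)/(4(Xₙ + 1))`. -/
theorem dPII_riccati_specialization
    (a b c : ℂ) (hc : c = -a / 2) (X : ℕ → ℂ)
    (hX1 : ∀ n, X n ≠ 1) (hX2 : ∀ n, X n ≠ -1)
    (hric : ∀ n, X (n + 1) * (4 * (X n + 1)) = 4 * X n - 2 * a * (n : ℂ) - a - 2 * b + 4) :
    ∀ n, 1 ≤ n →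
      X (n + 1) + X (n - 1) = ((a * (n : ℂ) + b) * X n + c) / (1 - (X n) ^ 2) := by
  intro n hn
  obtain ⟨m, rfl⟩ := Nat.exists_eq_add_of_le' hn
  rw [Nat.add_sub_cancel, eq_div_iff (one_sub_sq_ne_zero (hX1 _) (hX2 _))]
  have hprev := hric m
  have hnext := hric (m + 1)
  push_cast at hnext ⊢
  exact riccati_neighbours_add_mul_one_sub_sq hc (by linear_combination hprev)
    (by linear_combination hnext)
end

section
/- The contiguity relation I_{l+1,m+1} - I_{l+1,m} - (1-q^{l+1})·q^m·a·I_{l,m} = 0 holds, where I_{l,m} = ∫_{-∞}^{∞} (Π_{k=0}^{l-1}(q^k t - q^m a))/E_{q²}(c₁²t²) d_q t. -/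
/-- The bilateral Jackson integral `∫_{-∞}^{∞} f(t) d_q t`. -/
noncomputable def qIntegral (q : ℂ) (f : ℂ → ℂ) : ℂ :=
  (1 - q) * ∑' n : ℤ, (f (q ^ n) + f (-(q ^ n))) * q ^ n

/-- The infinite q-Pochhammer symbol `(a;q)_∞`. -/
noncomputable def qPochInf (a q : ℂ) : ℂ := ∏' i : ℕ, (1 - a * q ^ i)

/-- The integrand of `I_{l,m}`. -/
noncomputable def Ifun (q a c₁ : ℂ) (l : ℕ) (m : ℤ) (t : ℂ) : ℂ :=
  (∏ k ∈ Finset.range l, (q ^ k * t - q ^ m * a)) / qPochInf (-(c₁ ^ 2 * t ^ 2)) (q ^ 2)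

/-- `I_{l,m} = ∫_{-∞}^{∞} (∏_{k=0}^{l-1}(q^k t - q^m a))/E_{q²}(c₁²t²) d_q t`. -/
noncomputable def Iqm (q a c₁ : ℂ) (l : ℕ) (m : ℤ) : ℂ :=
  qIntegral q (Ifun q a c₁ l m)

noncomputable def qIntegralTerm (q : ℂ) (f : ℂ → ℂ) (n : ℤ) : ℂ :=
  (f (q ^ n) + f (-(q ^ n))) * q ^ n

theorem qIntegral_eq_tsum (q : ℂ) (f : ℂ → ℂ) :
    qIntegral q f = (1 - q) * ∑' n : ℤ, qIntegralTerm q f n := rfl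

theorem qIntegral_add_const_mul (q c : ℂ) {f g : ℂ → ℂ}
    (hf : Summable (qIntegralTerm q f)) (hg : Summable (qIntegralTerm q g)) :
    qIntegral q (fun t => f t + c * g t) = qIntegral q f + c * qIntegral q g := by
  have hterm : qIntegralTerm q (fun t => f t + c * g t)
      = fun n => qIntegralTerm q f n + c * qIntegralTerm q g n := by
    funext n
    simp only [qIntegralTerm]
    ring
  rw [qIntegral_eq_tsum, hterm, hf.tsum_add (hg.mul_left c), tsum_mul_left,
    qIntegral_eq_tsum, qIntegral_eq_tsum]
  ring

/-- Shifting `b ↦ q b` in `∏_{k<l+1} (qᵏ t - b)`: the first factor of the shifted product is split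
off as `t - q b = (t - b) - (q - 1) b`, and the remaining factors are `q (qᵏ t - b)`. -/
theorem prod_range_succ_sub_mul_eq {R : Type*} [CommRing R] (q b t : R) (l : ℕ) :
    ∏ k ∈ Finset.range (l + 1), (q ^ k * t - q * b)
      = ∏ k ∈ Finset.range (l + 1), (q ^ k * t - b)
        + (1 - q ^ (l + 1)) * b * ∏ k ∈ Finset.range l, (q ^ k * t - b) := by
  have hshift : ∀ k ∈ Finset.range l, q ^ (k + 1) * t - q * b = q * (q ^ k * t - b) :=
    fun k _ => by ring
  rw [Finset.prod_range_succ', Finset.prod_range_succ, Finset.prod_congr rfl hshift,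
    Finset.prod_mul_distrib, Finset.prod_const, Finset.card_range]
  ring

theorem Ifun_succ_succ (q a c : ℂ) (hq : q ≠ 0) (l : ℕ) (m : ℤ) (t : ℂ) :
    Ifun q a c (l + 1) (m + 1) t
      = Ifun q a c (l + 1) m t + (1 - q ^ (l + 1)) * q ^ m * a * Ifun q a c l m t := by
  have hb : q ^ (m + 1) * a = q * (q ^ m * a) := by rw [zpow_add_one₀ hq]; ring
  rw [Ifun, Ifun, Ifun, hb, prod_range_succ_sub_mul_eq, add_div, mul_div_assoc, mul_assoc _ (q ^ m)]

theorem contiguity_I_one_general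
    (q : ℂ) (hq0 : 0 < ‖q‖)
    (c₁ : ℝ) (a : ℂ) (l : ℕ) (m : ℤ)
    (hsum : ∀ (l' : ℕ) (m' : ℤ), Summable (fun n : ℤ =>
      (Ifun q a (c₁ : ℂ) l' m' (q ^ n) + Ifun q a (c₁ : ℂ) l' m' (-(q ^ n))) * q ^ n)) :
    Iqm q a (c₁ : ℂ) (l + 1) (m + 1) - Iqm q a (c₁ : ℂ) (l + 1) m
      - (1 - q ^ (l + 1)) * q ^ m * a * Iqm q a (c₁ : ℂ) l m = 0 := by
  have hq : q ≠ 0 := norm_pos_iff.mp hq0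
  have hIfun : Ifun q a c₁ (l + 1) (m + 1)
      = fun t => Ifun q a c₁ (l + 1) m t + (1 - q ^ (l + 1)) * q ^ m * a * Ifun q a c₁ l m t :=
    funext (Ifun_succ_succ q a c₁ hq l m)
  rw [Iqm, hIfun, qIntegral_add_const_mul _ _ (hsum (l + 1) m) (hsum l m), Iqm, Iqm]
  ring

/-- the contiguity relation
`I_{l+1,m+1} - I_{l+1,m} - (1-q^{l+1}) q^m a I_{l,m} = 0`. -/
theorem contiguity_I_one
    (q : ℂ) (hq0 : 0 < ‖q‖) (hq1 : ‖q‖ < 1)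
    (c₁ : ℝ) (hc₁ : 0 < c₁) (a : ℂ) (l : ℕ) (m : ℤ)
    (hsum : ∀ (l' : ℕ) (m' : ℤ), Summable (fun n : ℤ =>
      (Ifun q a (c₁ : ℂ) l' m' (q ^ n) + Ifun q a (c₁ : ℂ) l' m' (-(q ^ n))) * q ^ n)) :
    Iqm q a (c₁ : ℂ) (l + 1) (m + 1) - Iqm q a (c₁ : ℂ) (l + 1) m
      - (1 - q ^ (l + 1)) * q ^ m * a * Iqm q a (c₁ : ℂ) l m = 0 :=
  contiguity_I_one_general q hq0 c₁ a l m hsum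
end

section
/- Suppose a doubly-indexed sequence ψ_n^{l,m} of nonzero complex numbers satisfies, for all n ≥ 0 and m: (i) ψ_n^{0,m} = ψ_n^{0,0}; (ii) ψ_{n+1}^{1,m+1}ψ_n^{0,0} = a q^{m+n}(1-q^{n+1})ψ_{n+1}^{0,0}ψ_n^{1,m+1} + ψ_{n+1}^{1,m}ψ_n^{0,0}; and (iii) ψ_{n+1}^{1,m}ψ_n^{0,0} = -((1+c₁²a²q^{2m})/(c₁²aq^{m-n}))ψ_{n+1}^{0,0}ψ_n^{1,m+1} + (1/(c₁²aq^{m-n}))ψ_{n+1}^{0,0}ψ_n^{1,m}. Then the linear three-term relation ψ_n^{1,m+2} = ((1+q+c₁²a²q^{2m+n+2})/(1+c₁²a²q^{2m+2}))·ψ_n^{1,m+1} - (q/(1+c₁²a²q^{2m+2}))·ψ_n^{1,m} holds. -/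
/-!
Write `P = ψ_{n+1}^{0,0}`, `Q = ψ_n^{0,0}`, `x_k = ψ_n^{1,k}` and `Y_k = ψ_{n+1}^{1,k} Q`.
Relation (iii) at `m` and `m + 1` expresses `Y_m` and `Y_{m+1}` linearly in `x_m, x_{m+1}, x_{m+2}`,
and relation (ii) says that `Y_{m+1} - Y_m` is a multiple of `x_{m+1}`. Substituting the first two
into the third leaves a linear relation among the `x_k`, all multiplied by `P`; dividing by `P`
gives the three-term recurrence. After putting `u = q^m` and `v = q^n` the elimination is a
polynomial identity.
-/

theorem linear_relation_of_bilinear {K : Type*} [Field K]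
    {q a c u v P x₀ x₁ x₂ Y₀ Y₁ : K} (hP : P ≠ 0) (hv : v ≠ 0)
    (hY : Y₁ = a * u * v * (1 - v * q) * P * x₁ + Y₀)
    (hY₀ : c ^ 2 * a * u * Y₀ = v * P * (x₀ - (1 + c ^ 2 * a ^ 2 * u ^ 2) * x₁))
    (hY₁ : c ^ 2 * a * u * q * Y₁ = v * P * (x₁ - (1 + c ^ 2 * a ^ 2 * u ^ 2 * q ^ 2) * x₂)) :
    (1 + c ^ 2 * a ^ 2 * u ^ 2 * q ^ 2) * x₂
      = (1 + q + c ^ 2 * a ^ 2 * u ^ 2 * v * q ^ 2) * x₁ - q * x₀ := by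
  apply mul_left_cancel₀ (mul_ne_zero hv hP)
  linear_combination hY₁ - q * hY₀ - c ^ 2 * a * u * q * hY

theorem mul_eq_of_eq_neg_div_mul_add_one_div_mul {K : Type*} [Field K]
    {A B P Y x₀ x₁ : K} (hB : B ≠ 0)
    (h : Y = -(A / B) * P * x₁ + (1 / B) * P * x₀) :
    B * Y = P * (x₀ - A * x₁) := by
  rw [h]
  field_simp
  ring

theorem psi_linear_relation_general
    (q a c₁ : ℂ) (hq : q ≠ 0) (ha : a ≠ 0) (hc₁ : c₁ ≠ 0)
    (ψ : ℕ → ℕ → ℤ → ℂ)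
    (hψne : ∀ n l m, ψ n l m ≠ 0)
    (hden : ∀ m : ℤ, 1 + c₁ ^ 2 * a ^ 2 * q ^ (2 * m + 2) ≠ 0)
    (h2 : ∀ (n : ℕ) (m : ℤ),
      ψ (n + 1) 1 (m + 1) * ψ n 0 0
        = a * q ^ (m + (n : ℤ)) * (1 - q ^ (n + 1)) * ψ (n + 1) 0 0 * ψ n 1 (m + 1)
          + ψ (n + 1) 1 m * ψ n 0 0)
    (h3 : ∀ (n : ℕ) (m : ℤ),
      ψ (n + 1) 1 m * ψ n 0 0
        = -((1 + c₁ ^ 2 * a ^ 2 * q ^ (2 * m)) / (c₁ ^ 2 * a * q ^ (m - (n : ℤ))))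
            * ψ (n + 1) 0 0 * ψ n 1 (m + 1)
          + (1 / (c₁ ^ 2 * a * q ^ (m - (n : ℤ)))) * ψ (n + 1) 0 0 * ψ n 1 m) :
    ∀ (n : ℕ) (m : ℤ),
      ψ n 1 (m + 2)
        = ((1 + q + c₁ ^ 2 * a ^ 2 * q ^ (2 * m + (n : ℤ) + 2))
            / (1 + c₁ ^ 2 * a ^ 2 * q ^ (2 * m + 2))) * ψ n 1 (m + 1)
          - (q / (1 + c₁ ^ 2 * a ^ 2 * q ^ (2 * m + 2))) * ψ n 1 m := by
  intro n m
  have hv : q ^ n ≠ 0 := pow_ne_zero n hq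
  have hB (k : ℤ) : c₁ ^ 2 * a * q ^ (k - n) ≠ 0 := by positivity
  have hY₀ := mul_eq_of_eq_neg_div_mul_add_one_div_mul (hB m) (h3 n m)
  have hY₁ := mul_eq_of_eq_neg_div_mul_add_one_div_mul (hB (m + 1)) (h3 n (m + 1))
  have hD := hden m
  rw [add_assoc m 1 1, one_add_one_eq_two] at hY₁
  simp only [two_mul, zpow_add₀ hq, zpow_sub₀ hq, zpow_natCast, zpow_ofNat]
    at hY₀ hY₁ hD h2 ⊢
  have key := linear_relation_of_bilinear (q := q) (a := a) (c := c₁) (u := q ^ m) (v := q ^ n)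
    (x₀ := ψ n 1 m) (x₁ := ψ n 1 (m + 1)) (x₂ := ψ n 1 (m + 2))
    (Y₀ := ψ (n + 1) 1 m * ψ n 0 0) (Y₁ := ψ (n + 1) 1 (m + 1) * ψ n 0 0)
    (hψne (n + 1) 0 0) hv (by rw [h2 n m]; ring)
    (by field_simp at hY₀ ⊢; linear_combination hY₀)
    (by field_simp at hY₁ ⊢; linear_combination hY₁)
  rw [div_mul_eq_mul_div, div_mul_eq_mul_div, div_sub_div_same,
    eq_div_iff (by simpa [sq] using hD)]
  linear_combination key

/-- the linear three-term relation in `m` for `ψₙ^{1,m}` follows from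
the bilinear relations (i)–(iii). -/
theorem psi_linear_relation
    (q a c₁ : ℂ) (hq : q ≠ 0) (ha : a ≠ 0) (hc₁ : c₁ ≠ 0)
    (ψ : ℕ → ℕ → ℤ → ℂ)
    (hψne : ∀ n l m, ψ n l m ≠ 0)
    (hden : ∀ m : ℤ, 1 + c₁ ^ 2 * a ^ 2 * q ^ (2 * m + 2) ≠ 0)
    (h1 : ∀ (n : ℕ) (m : ℤ), ψ n 0 m = ψ n 0 0)
    (h2 : ∀ (n : ℕ) (m : ℤ),
      ψ (n + 1) 1 (m + 1) * ψ n 0 0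
        = a * q ^ (m + (n : ℤ)) * (1 - q ^ (n + 1)) * ψ (n + 1) 0 0 * ψ n 1 (m + 1)
          + ψ (n + 1) 1 m * ψ n 0 0)
    (h3 : ∀ (n : ℕ) (m : ℤ),
      ψ (n + 1) 1 m * ψ n 0 0
        = -((1 + c₁ ^ 2 * a ^ 2 * q ^ (2 * m)) / (c₁ ^ 2 * a * q ^ (m - (n : ℤ))))
            * ψ (n + 1) 0 0 * ψ n 1 (m + 1)
          + (1 / (c₁ ^ 2 * a * q ^ (m - (n : ℤ)))) * ψ (n + 1) 0 0 * ψ n 1 m) :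
    ∀ (n : ℕ) (m : ℤ),
      ψ n 1 (m + 2)
        = ((1 + q + c₁ ^ 2 * a ^ 2 * q ^ (2 * m + (n : ℤ) + 2))
            / (1 + c₁ ^ 2 * a ^ 2 * q ^ (2 * m + 2))) * ψ n 1 (m + 1)
          - (q / (1 + c₁ ^ 2 * a ^ 2 * q ^ (2 * m + 2))) * ψ n 1 m :=
  psi_linear_relation_general q a c₁ hq ha hc₁ ψ hψne hden h2 h3
end

section
/- Suppose X_n ≠ 0 satisfies the discrete Riccati equation X_{n+1} = (1 - q^{n+2})/(X_n + i c₁ a q^{n-m+1}) for all n ≥ 0. Then X_n satisfies the q-Painlevé IV equation (X_{n+1}X_n - 1)(X_{n-1}X_n - 1) = q^{-N+2n-m-1}a₀a₁^{3/2}a₂²·(X_n + q^{N-m}a₁^{1/2})(X_n + q^{-N+m}a₁^{-1/2})/(X_n + q^{-N+n-m}a₁^{1/2}a₂) for all n ≥ 1, where a₀^{1/2} = -i q a⁻¹c₁⁻¹, a₀^{1/2}a₁^{1/2} = q^{-N}, a₂ = q^{2N+2}. -/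
/-!
Write `c = i c₁ a q^{-m-1}`, so that the Riccati equation reads
`X_{n+1} (X_n + c q^{n+2}) = 1 - q^{n+2}` and, after solving for `a₀^{1/2}, a₁^{1/2}, a₂`,
the q-P_IV equation reads
`(X_{n+1}X_n - 1)(X_{n-1}X_n - 1) = c q^{2n+3} (X_n + c)(X_n + c⁻¹) / (X_n + c q^{n+2})`.
Both factors on the left are read off the Riccati equation directly: the step `n → n+1` gives
`(X_{n+1}X_n - 1)(X_n + c q^{n+2}) = -q^{n+2} (X_n + c)`, and the step `n-1 → n`, read backwards,
gives `X_{n-1}X_n - 1 = -q^{n+1} (c X_n + 1)`.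
-/

section Riccati

variable {K : Type*} [Field K]

theorem riccati_mul_sub_one_next {x y c r : K} (h : y * (x + c * r) = 1 - r) :
    (y * x - 1) * (x + c * r) = -r * (x + c) := by
  linear_combination x * h

theorem riccati_mul_sub_one_prev {x w c r : K} (h : x * (w + c * r) = 1 - r) :
    w * x - 1 = -r * (c * x + 1) := by
  linear_combination h

theorem qPIV_of_riccati_step {x y w c r s : K} (hc : c ≠ 0) (hd : x + c * (r * s) ≠ 0)
    (hy : y * (x + c * (r * s)) = 1 - r * s) (hw : x * (w + c * r) = 1 - r) :
    (y * x - 1) * (w * x - 1) = c * r ^ 2 * s * ((x + c) * (x + c⁻¹)) / (x + c * (r * s)) := by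
  rw [eq_div_iff hd, mul_right_comm, riccati_mul_sub_one_next hy, riccati_mul_sub_one_prev hw]
  field_simp

theorem qPIV_of_riccati {q c : K} {X : ℕ → K} (hc : c ≠ 0)
    (hric : ∀ n : ℕ, X (n + 1) * (X n + c * q ^ (n + 2)) = 1 - q ^ (n + 2))
    {n : ℕ} (hn : 1 ≤ n) (hd : X n + c * q ^ (n + 2) ≠ 0) :
    (X (n + 1) * X n - 1) * (X (n - 1) * X n - 1)
      = c * q ^ (2 * n + 3) * ((X n + c) * (X n + c⁻¹)) / (X n + c * q ^ (n + 2)) := by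
  obtain ⟨k, rfl⟩ := Nat.exists_eq_add_of_le' hn
  have hsucc : q ^ (k + 1 + 2) = q ^ (k + 2) * q := pow_succ q (k + 2)
  rw [hsucc] at hd ⊢
  rw [Nat.add_sub_cancel, qPIV_of_riccati_step hc hd (hsucc ▸ hric (k + 1)) (hric k)]
  ring

end Riccati

section Parameters

variable {K : Type*} [Field K] {q b : K} {m N : ℤ} {n : ℕ}

theorem riccati_coeff_eq (hq : q ≠ 0) :
    b * q ^ ((n : ℤ) - m + 1) = b * q ^ (-m - 1) * q ^ (n + 2) := by
  simp only [zpow_add₀ hq, zpow_sub₀ hq, zpow_neg, zpow_one, zpow_natCast]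
  field_simp
  ring

theorem qPIV_denom_eq (hq : q ≠ 0) :
    q ^ (-N + (n : ℤ) - m) * (b * q ^ (-N - 1)) * q ^ (2 * N + 2)
      = b * q ^ (-m - 1) * q ^ (n + 2) := by
  simp only [zpow_add₀ hq, zpow_sub₀ hq, zpow_neg, zpow_natCast, zpow_mul', zpow_ofNat]
  field_simp
  ring

theorem qPIV_coeff_eq (hq : q ≠ 0) :
    q ^ (-N + 2 * (n : ℤ) - m - 1) * ((q ^ (-N)) ^ 2 * (b * q ^ (-N - 1))) * (q ^ (2 * N + 2)) ^ 2
      = b * q ^ (-m - 1) * q ^ (2 * n + 3) := by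
  simp only [zpow_add₀ hq, zpow_sub₀ hq, zpow_neg, zpow_natCast, zpow_mul', zpow_ofNat]
  field_simp
  ring

theorem qPIV_factor_eq (hq : q ≠ 0) : q ^ (N - m) * (b * q ^ (-N - 1)) = b * q ^ (-m - 1) := by
  simp only [zpow_sub₀ hq, zpow_neg, zpow_one]
  field_simp

theorem qPIV_factor_inv_eq (hq : q ≠ 0) :
    q ^ (-N + m) * (b * q ^ (-N - 1))⁻¹ = (b * q ^ (-m - 1))⁻¹ := by
  simp only [zpow_add₀ hq, zpow_sub₀ hq, zpow_neg, zpow_one]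
  field_simp

end Parameters

theorem sa₁_eq_of_mul_eq {q a c₁ sa₀ sa₁ : ℂ} {N : ℤ}
    (hq : q ≠ 0) (ha : a ≠ 0) (hc₁ : c₁ ≠ 0)
    (hsa₀ : sa₀ = -Complex.I * q * a⁻¹ * c₁⁻¹) (hsa₀₁ : sa₀ * sa₁ = q ^ (-N)) :
    sa₁ = Complex.I * c₁ * a * q ^ (-N - 1) := by
  have hsa₀0 : sa₀ ≠ 0 := by simp [hsa₀, hq, ha, hc₁]
  refine mul_left_cancel₀ hsa₀0 (hsa₀₁.trans ?_)
  rw [hsa₀, zpow_sub₀ hq, zpow_one]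
  field_simp
  rw [Complex.I_sq, neg_neg]

theorem riccati_to_qPIV_general
    (q a c₁ : ℂ) (hq : q ≠ 0) (ha : a ≠ 0) (hc₁ : c₁ ≠ 0)
    (m N : ℤ)
    (sa₀ sa₁ a₀ a₁ a₂ : ℂ)
    (hsa₀ : sa₀ = -Complex.I * q * a⁻¹ * c₁⁻¹)
    (hsa₀₁ : sa₀ * sa₁ = q ^ (-N))
    (ha₀ : a₀ = sa₀ ^ 2) (ha₁ : a₁ = sa₁ ^ 2) (ha₂ : a₂ = q ^ (2 * N + 2))
    (X : ℕ → ℂ)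
    (hric : ∀ n : ℕ,
      X (n + 1) * (X n + Complex.I * c₁ * a * q ^ ((n : ℤ) - m + 1)) = 1 - q ^ (n + 2))
    (hden : ∀ n : ℕ, X n + q ^ (-N + (n : ℤ) - m) * sa₁ * a₂ ≠ 0) :
    ∀ n : ℕ, 1 ≤ n →
      (X (n + 1) * X n - 1) * (X (n - 1) * X n - 1)
        = q ^ (-N + 2 * (n : ℤ) - m - 1) * a₀ * (a₁ * sa₁) * a₂ ^ 2
          * ((X n + q ^ (N - m) * sa₁) * (X n + q ^ (-N + m) * sa₁⁻¹))
          / (X n + q ^ (-N + (n : ℤ) - m) * sa₁ * a₂) := by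
  intro n hn
  have hcoef : a₀ * (a₁ * sa₁) = (q ^ (-N)) ^ 2 * sa₁ := by
    rw [ha₀, ha₁, ← hsa₀₁]; ring
  have hsa₁ := sa₁_eq_of_mul_eq hq ha hc₁ hsa₀ hsa₀₁
  have hc : Complex.I * c₁ * a * q ^ (-m - 1) ≠ 0 := by simp [ha, hc₁, zpow_ne_zero _ hq]
  subst ha₂
  rw [mul_assoc _ a₀, hcoef]
  simp only [hsa₁] at hden ⊢
  rw [qPIV_coeff_eq hq, qPIV_factor_eq hq, qPIV_factor_inv_eq hq, qPIV_denom_eq hq]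
  exact qPIV_of_riccati hc (fun k => riccati_coeff_eq (n := k) hq ▸ hric k) hn
    (qPIV_denom_eq hq ▸ hden n)

/-- solutions of the discrete Riccati equation
`X_{n+1} = (1-q^{n+2})/(Xₙ + i c₁ a q^{n-m+1})` solve the q-Painlevé IV equation. -/
theorem riccati_to_qPIV
    (q a c₁ : ℂ) (hq : q ≠ 0) (ha : a ≠ 0) (hc₁ : c₁ ≠ 0)
    (hq0 : 0 < ‖q‖) (hq1 : ‖q‖ < 1)
    (m N : ℤ)
    (sa₀ sa₁ a₀ a₁ a₂ : ℂ)
    (hsa₀ : sa₀ = -Complex.I * q * a⁻¹ * c₁⁻¹)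
    (hsa₀₁ : sa₀ * sa₁ = q ^ (-N))
    (ha₀ : a₀ = sa₀ ^ 2) (ha₁ : a₁ = sa₁ ^ 2) (ha₂ : a₂ = q ^ (2 * N + 2))
    (X : ℕ → ℂ) (hXne : ∀ n, X n ≠ 0)
    (hric : ∀ n : ℕ,
      X (n + 1) * (X n + Complex.I * c₁ * a * q ^ ((n : ℤ) - m + 1)) = 1 - q ^ (n + 2))
    (hden : ∀ n : ℕ, X n + q ^ (-N + (n : ℤ) - m) * sa₁ * a₂ ≠ 0) :
    ∀ n : ℕ, 1 ≤ n →
      (X (n + 1) * X n - 1) * (X (n - 1) * X n - 1)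
        = q ^ (-N + 2 * (n : ℤ) - m - 1) * a₀ * (a₁ * sa₁) * a₂ ^ 2
          * ((X n + q ^ (N - m) * sa₁) * (X n + q ^ (-N + m) * sa₁⁻¹))
          / (X n + q ^ (-N + (n : ℤ) - m) * sa₁ * a₂) :=
  riccati_to_qPIV_general q a c₁ hq ha hc₁ m N sa₀ sa₁ a₀ a₁ a₂ hsa₀ hsa₀₁ ha₀ ha₁ ha₂ X hric hden
end
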